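/- Consider the loss function L of a 2-shortcut network (n = 2) whose activation functions σ_pre, σ_mid, σ_post are C^∞ with σ_mid(0) = σ_post(0) = 0, and let c = σ_mid'(0)·σ_post'(0) ≠ 0. Define M ∈ ℝ^{d_x×d_x} by M_{ij} = (1/m)·Σ_{μ=1}^m (x^μ_i − y^μ_i)·σ_pre(x^μ_j). Then a real number μ is an eigenvalue of the Hessian matrix of L at the zero weight configuration w = 0 if and only if μ²/c² is an eigenvalue of MᵀM. In particular, the set of eigenvalues of the Hessian at zero, and hence its condition number, does not depend on the number R of residual units. -/

import Mathlib

noncomputable section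

open scoped BigOperators

/-- Entrywise application of a scalar function to a vector. -/
def emap {d : ℕ} (σ : ℝ → ℝ) (v : Fin d → ℝ) : Fin d → ℝ := fun i => σ (v i)

/-- Matrix–vector product. -/
def mvec {d : ℕ} (M : Fin d → Fin d → ℝ) (v : Fin d → ℝ) : Fin d → ℝ :=
  fun i => ∑ j, M i j * v j

/-- The transformation path with `k` weight matrices applied to `v`:
`a₁ = W₀ v`, `a_{l+1} = W_l σmid.(a_l)`; `chain σmid W k v = a_k`. -/
def chain {d : ℕ} (σmid : ℝ → ℝ) (W : ℕ → Fin d → Fin d → ℝ) :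
    ℕ → (Fin d → ℝ) → (Fin d → ℝ)
  | 0, v => v
  | k + 1, v => mvec (W k) (if k = 0 then v else emap σmid (chain σmid W k v))

/-- One residual unit of an `n`-shortcut network:
`u(x) = σpost.(Wⁿ σmid.(⋯ σmid.(W¹ σpre.(x)))) + x`. -/
def resUnit {d : ℕ} (σpre σmid σpost : ℝ → ℝ) (n : ℕ) (W : ℕ → Fin d → Fin d → ℝ)
    (x : Fin d → ℝ) : Fin d → ℝ :=
  fun i => σpost (chain σmid W n (emap σpre x) i) + x i

/-- The `n`-shortcut network with `R` residual units: composition `u_R ∘ ⋯ ∘ u_1`. -/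
def net {d : ℕ} (σpre σmid σpost : ℝ → ℝ) (n : ℕ) (W : ℕ → ℕ → Fin d → Fin d → ℝ) :
    ℕ → (Fin d → ℝ) → (Fin d → ℝ)
  | 0, x => x
  | r + 1, x => resUnit σpre σmid σpost n (W r) (net σpre σmid σpost n W r x)

/-- Extend finitely indexed weights to ℕ-indexed weights (by zero out of range). -/
def extendW {R n d : ℕ} (W : Fin R → Fin n → Fin d → Fin d → ℝ) :
    ℕ → ℕ → Fin d → Fin d → ℝ :=
  fun r l => if h : r < R ∧ l < n then W ⟨r, h.1⟩ ⟨l, h.2⟩ else 0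

/-- The loss function of an `n`-shortcut network with `R` residual units,
as a function of the collection of all the weight matrices. -/
def loss {d m : ℕ} (σpre σmid σpost : ℝ → ℝ) (n R : ℕ) (X Y : Fin m → Fin d → ℝ)
    (W : Fin R → Fin n → Fin d → Fin d → ℝ) : ℝ :=
  (1 / (2 * (m : ℝ))) *
    ∑ μ : Fin m, ∑ i, (net σpre σmid σpost n (extendW W) R (X μ) i - Y μ i) ^ 2

/-- The coordinate direction in weight space corresponding to the parameter `w^{r,l}_{i,j}`. -/
def coordDir (R n d : ℕ) (r : Fin R) (l : Fin n) (i j : Fin d) :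
    Fin R → Fin n → Fin d → Fin d → ℝ :=
  fun r' l' i' j' => if r' = r ∧ l' = l ∧ i' = i ∧ j' = j then 1 else 0

/-- Second-order partial derivative of `f` at `0` along the directions `v₁, v₂`. -/
def d2 {E : Type*} [NormedAddCommGroup E] [NormedSpace ℝ E] (f : E → ℝ) (v₁ v₂ : E) : ℝ :=
  fderiv ℝ (fun w => fderiv ℝ f w v₂) (0 : E) v₁



section Aux
variable {dx : ℕ} (σpre σmid σpost : ℝ → ℝ)

lemma chain_two (W : ℕ → Fin dx → Fin dx → ℝ) (v : Fin dx → ℝ) (a : Fin dx) :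
    chain σmid W 2 v a = ∑ b, W 1 a b * σmid (∑ c', W 0 b c' * v c') := by
  show mvec (W 1) (if (1:ℕ) = 0 then v else emap σmid (chain σmid W 1 v)) a = _
  simp [mvec, emap, chain]

lemma resUnit_apply (W : ℕ → Fin dx → Fin dx → ℝ) (x : Fin dx → ℝ) (a : Fin dx) :
    resUnit σpre σmid σpost 2 W x a
      = σpost (∑ b, W 1 a b * σmid (∑ c', W 0 b c' * σpre (x c'))) + x a := by
  rw [resUnit, chain_two]
  simp [emap]

lemma resUnit_id (hmid0 : σmid 0 = 0) (hpost0 : σpost 0 = 0) (W : ℕ → Fin dx → Fin dx → ℝ) (x : Fin dx → ℝ)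
    (h : (∀ a b, W 0 a b = 0) ∨ (∀ a b, W 1 a b = 0)) :
    resUnit σpre σmid σpost 2 W x = x := by
  funext a
  rw [resUnit_apply]
  rcases h with h | h
  · simp [h, hmid0, hpost0]
  · simp [h, hpost0]

lemma net_id (hmid0 : σmid 0 = 0) (hpost0 : σpost 0 = 0) (Wn : ℕ → ℕ → Fin dx → Fin dx → ℝ)
    (h : ∀ ρ, (∀ a b, Wn ρ 0 a b = 0) ∨ (∀ a b, Wn ρ 1 a b = 0)) :
    ∀ (r : ℕ) (x : Fin dx → ℝ), net σpre σmid σpost 2 Wn r x = x := by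
  intro r
  induction r with
  | zero => intro x; rfl
  | succ r ih =>
    intro x
    show resUnit σpre σmid σpost 2 (Wn r) (net σpre σmid σpost 2 Wn r x) = x
    rw [ih x, resUnit_id σpre σmid σpost hmid0 hpost0 _ _ (h r)]

lemma net_single (hmid0 : σmid 0 = 0) (hpost0 : σpost 0 = 0) (Wn : ℕ → ℕ → Fin dx → Fin dx → ℝ) (r₀ : ℕ)
    (h : ∀ ρ, ρ ≠ r₀ → (∀ a b, Wn ρ 0 a b = 0) ∨ (∀ a b, Wn ρ 1 a b = 0)) :
    ∀ (r : ℕ) (x : Fin dx → ℝ),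
      net σpre σmid σpost 2 Wn r x
        = if r₀ < r then resUnit σpre σmid σpost 2 (Wn r₀) x else x := by
  intro r
  induction r with
  | zero => intro x; simp [net]
  | succ r ih =>
    intro x
    show resUnit σpre σmid σpost 2 (Wn r) (net σpre σmid σpost 2 Wn r x) = _
    by_cases hr : r = r₀
    · subst hr
      rw [ih x, if_neg (lt_irrefl r), if_pos (Nat.lt_succ_self r)]
    · rw [ih x]
      by_cases hlt : r₀ < r
      · rw [if_pos hlt, if_pos (by omega),
          resUnit_id σpre σmid σpost hmid0 hpost0 _ _ (h r hr)]
      · rw [if_neg hlt, if_neg (by omega),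
          resUnit_id σpre σmid σpost hmid0 hpost0 _ _ (h r hr)]

end Aux

section Combo
variable {R dx : ℕ}

lemma extendW_combo (s t : ℝ) (r r' : Fin R) (l₁ l₂ : Fin 2) (i j k l : Fin dx)
    (ρ lam : ℕ) (a b : Fin dx) :
    extendW (s • coordDir R 2 dx r l₁ i j + t • coordDir R 2 dx r' l₂ k l) ρ lam a b
      = (if ρ = r.val ∧ lam = l₁.val ∧ a = i ∧ b = j then s else 0)
        + (if ρ = r'.val ∧ lam = l₂.val ∧ a = k ∧ b = l then t else 0) := by
  by_cases h : ρ < R ∧ lam < 2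
  · simp only [extendW, dif_pos h, Pi.add_apply, Pi.smul_apply, coordDir, smul_eq_mul,
      mul_ite, mul_one, mul_zero]
    congr 1
    · refine if_congr ?_ rfl rfl
      simp [Fin.ext_iff]
    · refine if_congr ?_ rfl rfl
      simp [Fin.ext_iff]
  · simp only [extendW, dif_neg h, Pi.zero_apply]
    rw [if_neg, if_neg, add_zero]
    · rintro ⟨h1, h2, -⟩
      have := r'.isLt; have := l₂.isLt; omega
    · rintro ⟨h1, h2, -⟩
      have := r.isLt; have := l₁.isLt; omega

end Combo

section Smooth
variable {R dx : ℕ} {σpre σmid σpost : ℝ → ℝ}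

lemma contDiff_eval4 {n d : ℕ} (r : Fin R) (l : Fin n) (i j : Fin d) :
    ContDiff ℝ (⊤ : ℕ∞) (fun W : Fin R → Fin n → Fin d → Fin d → ℝ => W r l i j) := by
  have h1 : ContDiff ℝ (⊤ : ℕ∞) (fun W : Fin R → Fin n → Fin d → Fin d → ℝ => W r) :=
    contDiff_pi.mp contDiff_id r
  have h2 := contDiff_pi.mp h1 l
  have h3 := contDiff_pi.mp h2 i
  exact contDiff_pi.mp h3 j

lemma contDiff_extendW {n d : ℕ} (r l : ℕ) (i j : Fin d) :
    ContDiff ℝ (⊤ : ℕ∞) (fun W : Fin R → Fin n → Fin d → Fin d → ℝ => extendW W r l i j) := by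
  by_cases h : r < R ∧ l < n
  · have he : (fun W : Fin R → Fin n → Fin d → Fin d → ℝ => extendW W r l i j)
        = fun W => W ⟨r, h.1⟩ ⟨l, h.2⟩ i j := by
      funext W; simp [extendW, h]
    rw [he]; exact contDiff_eval4 _ _ _ _
  · have he : (fun W : Fin R → Fin n → Fin d → Fin d → ℝ => extendW W r l i j)
        = fun _ => 0 := by
      funext W; simp [extendW, h]
    rw [he]; exact contDiff_const

lemma contDiff_net (hpre : ContDiff ℝ (⊤ : ℕ∞) σpre) (hmid : ContDiff ℝ (⊤ : ℕ∞) σmid)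
    (hpost : ContDiff ℝ (⊤ : ℕ∞) σpost) (x : Fin dx → ℝ) (r : ℕ) :
    ∀ i : Fin dx, ContDiff ℝ (⊤ : ℕ∞) (fun W : Fin R → Fin 2 → Fin dx → Fin dx → ℝ =>
      net σpre σmid σpost 2 (extendW W) r x i) := by
  induction r with
  | zero => intro i; exact contDiff_const
  | succ r ih =>
    intro i
    have he : (fun W : Fin R → Fin 2 → Fin dx → Fin dx → ℝ =>
        net σpre σmid σpost 2 (extendW W) (r+1) x i)
        = fun W => σpost (∑ b, extendW W r 1 i b *
            σmid (∑ c', extendW W r 0 b c' * σpre (net σpre σmid σpost 2 (extendW W) r x c')))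
          + net σpre σmid σpost 2 (extendW W) r x i := by
      funext W
      show resUnit σpre σmid σpost 2 (extendW W r) (net σpre σmid σpost 2 (extendW W) r x) i = _
      rw [resUnit_apply]
    rw [he]
    refine ContDiff.add ?_ (ih i)
    refine hpost.comp (ContDiff.sum fun b _ => ?_)
    refine (contDiff_extendW r 1 i b).mul ?_
    refine hmid.comp (ContDiff.sum fun c' _ => ?_)
    exact (contDiff_extendW r 0 b c').mul (hpre.comp (ih c'))

lemma contDiff_loss {m : ℕ} (hpre : ContDiff ℝ (⊤ : ℕ∞) σpre) (hmid : ContDiff ℝ (⊤ : ℕ∞) σmid)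
    (hpost : ContDiff ℝ (⊤ : ℕ∞) σpost) (X Y : Fin m → Fin dx → ℝ) :
    ContDiff ℝ (⊤ : ℕ∞) (loss σpre σmid σpost 2 R X Y) := by
  unfold loss
  refine contDiff_const.mul (ContDiff.sum fun μ _ => ContDiff.sum fun i _ => ?_)
  exact ((contDiff_net hpre hmid hpost (X μ) R i).sub contDiff_const).pow 2

end Smooth

section D2
variable {E : Type*} [NormedAddCommGroup E] [NormedSpace ℝ E]

lemma d2_eq {f : E → ℝ} (hf : ContDiff ℝ (⊤ : ℕ∞) f) (v₁ v₂ : E) :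
    d2 f v₁ v₂ = deriv (fun s : ℝ => deriv (fun t : ℝ => f (s • v₁ + t • v₂)) 0) 0 := by
  have hfd : Differentiable ℝ f := hf.differentiable (by simp)
  have step1 : ∀ w : E, fderiv ℝ f w v₂ = deriv (fun t : ℝ => f (w + t • v₂)) 0 := by
    intro w
    have hline : HasDerivAt (fun t : ℝ => w + t • v₂) v₂ 0 := by
      simpa using ((hasDerivAt_id (0:ℝ)).smul_const v₂).const_add w
    have h2 := (hfd (w + (0:ℝ) • v₂)).hasFDerivAt.comp_hasDerivAt 0 hline
    simp only [zero_smul, add_zero] at h2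
    exact (h2.deriv).symm
  have hFd : Differentiable ℝ (fun w => fderiv ℝ f w v₂) := by
    have h := (hf.fderiv_right (m := (⊤ : ℕ∞)) (by simp)).differentiable (by simp)
    exact fun w => (h w).clm_apply (differentiableAt_const v₂)
  have hl : HasDerivAt (fun s : ℝ => s • v₁) v₁ 0 := by
    simpa using (hasDerivAt_id (0:ℝ)).smul_const v₁
  have key := (hFd ((0:ℝ) • v₁)).hasFDerivAt.comp_hasDerivAt 0 hl
  simp only [zero_smul] at key
  rw [d2, ← key.deriv]
  congr 1
  funext s
  simp only [Function.comp]
  exact step1 (s • v₁)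

end D2

section Entries
variable {R dx m : ℕ} {σpre σmid σpost : ℝ → ℝ}

lemma d2_loss_zero (hpre : ContDiff ℝ (⊤ : ℕ∞) σpre) (hmid : ContDiff ℝ (⊤ : ℕ∞) σmid)
    (hpost : ContDiff ℝ (⊤ : ℕ∞) σpost) (hmid0 : σmid 0 = 0) (hpost0 : σpost 0 = 0)
    (X Y : Fin m → Fin dx → ℝ)
    (r r' : Fin R) (l₁ l₂ : Fin 2) (i j k l : Fin dx)
    (hcond : ∀ ρ : ℕ,
      (¬(ρ = r.val ∧ 0 = l₁.val) ∧ ¬(ρ = r'.val ∧ 0 = l₂.val)) ∨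
      (¬(ρ = r.val ∧ 1 = l₁.val) ∧ ¬(ρ = r'.val ∧ 1 = l₂.val))) :
    d2 (loss σpre σmid σpost 2 R X Y)
      (coordDir R 2 dx r l₁ i j) (coordDir R 2 dx r' l₂ k l) = 0 := by
  rw [d2_eq (contDiff_loss hpre hmid hpost X Y)]
  have hnet : ∀ s t : ℝ,
      loss σpre σmid σpost 2 R X Y
          (s • coordDir R 2 dx r l₁ i j + t • coordDir R 2 dx r' l₂ k l)
        = (1 / (2 * (m:ℝ))) * ∑ μ : Fin m, ∑ a, (X μ a - Y μ a) ^ 2 := by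
    intro s t
    rw [loss]
    congr 1
    refine Finset.sum_congr rfl fun μ _ => Finset.sum_congr rfl fun a _ => ?_
    have hid : net σpre σmid σpost 2
        (extendW (s • coordDir R 2 dx r l₁ i j + t • coordDir R 2 dx r' l₂ k l)) R (X μ) = X μ := by
      refine net_id σpre σmid σpost hmid0 hpost0 _ (fun ρ => ?_) R (X μ)
      rcases hcond ρ with ⟨h1, h2⟩ | ⟨h1, h2⟩
      · left
        intro a b
        rw [extendW_combo]
        rw [if_neg, if_neg, add_zero]
        · rintro ⟨ha, hb, -⟩; exact h2 ⟨ha, hb⟩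
        · rintro ⟨ha, hb, -⟩; exact h1 ⟨ha, hb⟩
      · right
        intro a b
        rw [extendW_combo]
        rw [if_neg, if_neg, add_zero]
        · rintro ⟨ha, hb, -⟩; exact h2 ⟨ha, hb⟩
        · rintro ⟨ha, hb, -⟩; exact h1 ⟨ha, hb⟩
    rw [hid]
  have h1 : (fun s : ℝ => deriv (fun t : ℝ => loss σpre σmid σpost 2 R X Y
      (s • coordDir R 2 dx r l₁ i j + t • coordDir R 2 dx r' l₂ k l)) 0) = fun _ => 0 := by
    funext s
    rw [show (fun t : ℝ => loss σpre σmid σpost 2 R X Y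
        (s • coordDir R 2 dx r l₁ i j + t • coordDir R 2 dx r' l₂ k l))
      = fun _ : ℝ => (1 / (2 * (m:ℝ))) * ∑ μ : Fin m, ∑ a, (X μ a - Y μ a) ^ 2
      from funext fun t => hnet s t]
    exact deriv_const _ _
  rw [h1, deriv_const]

end Entries

section OffDiag
variable {R dx m : ℕ} {σpre σmid σpost : ℝ → ℝ}

lemma net_offdiag₁ (hmid0 : σmid 0 = 0) (hpost0 : σpost 0 = 0)
    (r : Fin R) (i j k l : Fin dx) (s t : ℝ) (x : Fin dx → ℝ) (a : Fin dx) :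
    net σpre σmid σpost 2
      (extendW (s • coordDir R 2 dx r 0 i j + t • coordDir R 2 dx r 1 k l)) R x a
    = (if a = k then σpost (t * (if l = i then σmid (s * σpre (x j)) else 0)) else 0) + x a := by
  have hW := extendW_combo s t r r 0 1 i j k l
  have h0 : ∀ a b : Fin dx, extendW (s • coordDir R 2 dx r 0 i j + t • coordDir R 2 dx r 1 k l)
      r.val 0 a b = if a = i ∧ b = j then s else 0 := by
    intro a b; rw [hW]; simp
  have h1 : ∀ a b : Fin dx, extendW (s • coordDir R 2 dx r 0 i j + t • coordDir R 2 dx r 1 k l)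
      r.val 1 a b = if a = k ∧ b = l then t else 0 := by
    intro a b; rw [hW]; simp
  have hon : ∀ ρ : ℕ, ρ ≠ r.val →
      (∀ a b : Fin dx, extendW (s • coordDir R 2 dx r 0 i j + t • coordDir R 2 dx r 1 k l)
        ρ 0 a b = 0) ∨
      (∀ a b : Fin dx, extendW (s • coordDir R 2 dx r 0 i j + t • coordDir R 2 dx r 1 k l)
        ρ 1 a b = 0) := by
    intro ρ hρ; left; intro a b
    rw [hW, if_neg, if_neg, add_zero]
    · rintro ⟨ha, -⟩; exact hρ ha
    · rintro ⟨ha, -⟩; exact hρ ha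
  rw [net_single σpre σmid σpost hmid0 hpost0 _ r.val hon R x, if_pos r.isLt, resUnit_apply]
  simp only [h0, h1]
  by_cases ha : a = k <;> by_cases hl : l = i <;>
    simp [ha, hl, hmid0, hpost0, ite_and, ite_mul, mul_ite, zero_mul, mul_zero,
      Finset.sum_ite_eq, Finset.sum_ite_eq', apply_ite σmid, apply_ite σpost] <;>
    exact fun h => absurd h.symm hl

lemma net_offdiag₂ (hmid0 : σmid 0 = 0) (hpost0 : σpost 0 = 0)
    (r : Fin R) (i j k l : Fin dx) (s t : ℝ) (x : Fin dx → ℝ) (a : Fin dx) :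
    net σpre σmid σpost 2
      (extendW (s • coordDir R 2 dx r 1 k l + t • coordDir R 2 dx r 0 i j)) R x a
    = (if a = k then σpost (s * (if l = i then σmid (t * σpre (x j)) else 0)) else 0) + x a := by
  have hW := extendW_combo s t r r 1 0 k l i j
  have h0 : ∀ a b : Fin dx, extendW (s • coordDir R 2 dx r 1 k l + t • coordDir R 2 dx r 0 i j)
      r.val 0 a b = if a = i ∧ b = j then t else 0 := by
    intro a b; rw [hW]; simp
  have h1 : ∀ a b : Fin dx, extendW (s • coordDir R 2 dx r 1 k l + t • coordDir R 2 dx r 0 i j)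
      r.val 1 a b = if a = k ∧ b = l then s else 0 := by
    intro a b; rw [hW]; simp
  have hon : ∀ ρ : ℕ, ρ ≠ r.val →
      (∀ a b : Fin dx, extendW (s • coordDir R 2 dx r 1 k l + t • coordDir R 2 dx r 0 i j)
        ρ 0 a b = 0) ∨
      (∀ a b : Fin dx, extendW (s • coordDir R 2 dx r 1 k l + t • coordDir R 2 dx r 0 i j)
        ρ 1 a b = 0) := by
    intro ρ hρ; left; intro a b
    rw [hW, if_neg, if_neg, add_zero]
    · rintro ⟨ha, -⟩; exact hρ ha
    · rintro ⟨ha, -⟩; exact hρ ha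
  rw [net_single σpre σmid σpost hmid0 hpost0 _ r.val hon R x, if_pos r.isLt, resUnit_apply]
  simp only [h0, h1]
  by_cases ha : a = k <;> by_cases hl : l = i <;>
    simp [ha, hl, hmid0, hpost0, ite_and, ite_mul, mul_ite, zero_mul, mul_zero,
      Finset.sum_ite_eq, Finset.sum_ite_eq', apply_ite σmid, apply_ite σpost] <;>
    exact fun h => absurd h.symm hl

end OffDiag

section D2Off
variable {R dx m : ℕ} {σpre σmid σpost : ℝ → ℝ}

lemma d2_final_algebra (c1 c2 : ℝ) (hl : Prop) [Decidable hl]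
    (A B : Fin m → ℝ) :
    (1 / (2 * (m:ℝ))) * ∑ μ : Fin m, (2 * A μ * (c2 * (if hl then c1 * B μ else 0)))
      = (c1 * c2) * (if hl then (1 / (m:ℝ)) * ∑ μ : Fin m, A μ * B μ else 0) := by
  by_cases h : hl
  · simp only [if_pos h]
    have hS : (∑ μ : Fin m, 2 * A μ * (c2 * (c1 * B μ)))
        = (2 * (c1 * c2)) * ∑ μ : Fin m, A μ * B μ := by
      rw [Finset.mul_sum]; exact Finset.sum_congr rfl fun μ _ => by ring
    rw [hS]
    by_cases hm : (m:ℝ) = 0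
    · simp [hm]
    · field_simp
  · simp [if_neg h]

lemma d2_loss_offdiag₁ (hpre : ContDiff ℝ (⊤ : ℕ∞) σpre) (hmid : ContDiff ℝ (⊤ : ℕ∞) σmid)
    (hpost : ContDiff ℝ (⊤ : ℕ∞) σpost) (hmid0 : σmid 0 = 0) (hpost0 : σpost 0 = 0)
    (X Y : Fin m → Fin dx → ℝ) (r : Fin R) (i j k l : Fin dx) :
    d2 (loss σpre σmid σpost 2 R X Y) (coordDir R 2 dx r 0 i j) (coordDir R 2 dx r 1 k l)
      = (deriv σmid 0 * deriv σpost 0) *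
          (if l = i then (1 / (m:ℝ)) * ∑ μ : Fin m, (X μ k - Y μ k) * σpre (X μ j) else 0) := by
  rw [d2_eq (contDiff_loss hpre hmid hpost X Y)]
  have hloss : ∀ s t : ℝ,
      loss σpre σmid σpost 2 R X Y
          (s • coordDir R 2 dx r 0 i j + t • coordDir R 2 dx r 1 k l)
        = (1 / (2 * (m:ℝ))) * ∑ μ : Fin m, ∑ a,
            ((if a = k then σpost (t * (if l = i then σmid (s * σpre (X μ j)) else 0)) else 0)
              + X μ a - Y μ a) ^ 2 := by
    intro s t
    rw [loss]
    congr 1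
    refine Finset.sum_congr rfl fun μ _ => Finset.sum_congr rfl fun a _ => ?_
    rw [net_offdiag₁ hmid0 hpost0 r i j k l s t (X μ) a]
  have hDt : ∀ s : ℝ, HasDerivAt (fun t : ℝ => loss σpre σmid σpost 2 R X Y
        (s • coordDir R 2 dx r 0 i j + t • coordDir R 2 dx r 1 k l))
      ((1 / (2 * (m:ℝ))) * ∑ μ : Fin m, ∑ a,
        (if a = k then 2 * (X μ a - Y μ a) *
          (deriv σpost 0 * (if l = i then σmid (s * σpre (X μ j)) else 0)) else 0)) 0 := by
    intro s
    rw [show (fun t : ℝ => loss σpre σmid σpost 2 R X Y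
        (s • coordDir R 2 dx r 0 i j + t • coordDir R 2 dx r 1 k l))
      = fun t : ℝ => (1 / (2 * (m:ℝ))) * ∑ μ : Fin m, ∑ a,
            ((if a = k then σpost (t * (if l = i then σmid (s * σpre (X μ j)) else 0)) else 0)
              + X μ a - Y μ a) ^ 2 from funext fun t => hloss s t]
    refine HasDerivAt.const_mul _ (HasDerivAt.fun_sum fun μ _ => HasDerivAt.fun_sum fun a _ => ?_)
    by_cases ha : a = k
    · simp only [if_pos ha]
      set ψ : ℝ := if l = i then σmid (s * σpre (X μ j)) else 0 with hψ
      have h1 : HasDerivAt (fun t : ℝ => t * ψ) ψ 0 := by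
        simpa using (hasDerivAt_id (0:ℝ)).mul_const ψ
      have h2 : HasDerivAt σpost (deriv σpost 0) ((0:ℝ) * ψ) := by
        rw [zero_mul]; exact (hpost.differentiable (by simp) 0).hasDerivAt
      have h3 := h2.comp 0 h1
      have h4 := ((h3.add_const (X μ a)).sub_const (Y μ a)).fun_pow 2
      simpa [Function.comp, hpost0] using h4
    · simp only [if_neg ha]
      exact hasDerivAt_const _ _
  have hinner : (fun s : ℝ => deriv (fun t : ℝ => loss σpre σmid σpost 2 R X Y
        (s • coordDir R 2 dx r 0 i j + t • coordDir R 2 dx r 1 k l)) 0)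
      = fun s : ℝ => (1 / (2 * (m:ℝ))) * ∑ μ : Fin m, ∑ a,
        (if a = k then 2 * (X μ a - Y μ a) *
          (deriv σpost 0 * (if l = i then σmid (s * σpre (X μ j)) else 0)) else 0) :=
    funext fun s => (hDt s).deriv
  rw [hinner]
  have hDs : HasDerivAt (fun s : ℝ => (1 / (2 * (m:ℝ))) * ∑ μ : Fin m, ∑ a,
        (if a = k then 2 * (X μ a - Y μ a) *
          (deriv σpost 0 * (if l = i then σmid (s * σpre (X μ j)) else 0)) else 0))
      ((1 / (2 * (m:ℝ))) * ∑ μ : Fin m, ∑ a,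
        (if a = k then 2 * (X μ a - Y μ a) *
          (deriv σpost 0 * (if l = i then deriv σmid 0 * σpre (X μ j) else 0)) else 0)) 0 := by
    refine HasDerivAt.const_mul _ (HasDerivAt.fun_sum fun μ _ => HasDerivAt.fun_sum fun a _ => ?_)
    by_cases ha : a = k
    · simp only [if_pos ha]
      by_cases hl : l = i
      · simp only [if_pos hl]
        have h1 : HasDerivAt (fun s : ℝ => s * σpre (X μ j)) (σpre (X μ j)) 0 := by
          simpa using (hasDerivAt_id (0:ℝ)).mul_const (σpre (X μ j))
        have h2 : HasDerivAt σmid (deriv σmid 0) ((0:ℝ) * σpre (X μ j)) := by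
          rw [zero_mul]; exact (hmid.differentiable (by simp) 0).hasDerivAt
        have h3 := (h2.comp 0 h1).const_mul (deriv σpost 0)
        have h4 := h3.const_mul (2 * (X μ a - Y μ a))
        simpa [Function.comp] using h4
      · simp only [if_neg hl, mul_zero]
        exact hasDerivAt_const _ _
    · simp only [if_neg ha]
      exact hasDerivAt_const _ _
  rw [hDs.deriv]
  simp only [Finset.sum_ite_eq', Finset.mem_univ, if_true]
  exact d2_final_algebra (deriv σmid 0) (deriv σpost 0) (l = i)
    (fun μ => X μ k - Y μ k) (fun μ => σpre (X μ j))

lemma d2_loss_offdiag₂ (hpre : ContDiff ℝ (⊤ : ℕ∞) σpre) (hmid : ContDiff ℝ (⊤ : ℕ∞) σmid)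
    (hpost : ContDiff ℝ (⊤ : ℕ∞) σpost) (hmid0 : σmid 0 = 0) (hpost0 : σpost 0 = 0)
    (X Y : Fin m → Fin dx → ℝ) (r : Fin R) (i j k l : Fin dx) :
    d2 (loss σpre σmid σpost 2 R X Y) (coordDir R 2 dx r 1 k l) (coordDir R 2 dx r 0 i j)
      = (deriv σmid 0 * deriv σpost 0) *
          (if l = i then (1 / (m:ℝ)) * ∑ μ : Fin m, (X μ k - Y μ k) * σpre (X μ j) else 0) := by
  rw [d2_eq (contDiff_loss hpre hmid hpost X Y)]
  have hloss : ∀ s t : ℝ,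
      loss σpre σmid σpost 2 R X Y
          (s • coordDir R 2 dx r 1 k l + t • coordDir R 2 dx r 0 i j)
        = (1 / (2 * (m:ℝ))) * ∑ μ : Fin m, ∑ a,
            ((if a = k then σpost (s * (if l = i then σmid (t * σpre (X μ j)) else 0)) else 0)
              + X μ a - Y μ a) ^ 2 := by
    intro s t
    rw [loss]
    congr 1
    refine Finset.sum_congr rfl fun μ _ => Finset.sum_congr rfl fun a _ => ?_
    rw [net_offdiag₂ hmid0 hpost0 r i j k l s t (X μ) a]
  have hDt : ∀ s : ℝ, HasDerivAt (fun t : ℝ => loss σpre σmid σpost 2 R X Y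
        (s • coordDir R 2 dx r 1 k l + t • coordDir R 2 dx r 0 i j))
      ((1 / (2 * (m:ℝ))) * ∑ μ : Fin m, ∑ a,
        (if a = k then 2 * (X μ a - Y μ a) *
          (deriv σpost 0 * (s * (if l = i then deriv σmid 0 * σpre (X μ j) else 0))) else 0)) 0 := by
    intro s
    rw [show (fun t : ℝ => loss σpre σmid σpost 2 R X Y
        (s • coordDir R 2 dx r 1 k l + t • coordDir R 2 dx r 0 i j))
      = fun t : ℝ => (1 / (2 * (m:ℝ))) * ∑ μ : Fin m, ∑ a,
            ((if a = k then σpost (s * (if l = i then σmid (t * σpre (X μ j)) else 0)) else 0)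
              + X μ a - Y μ a) ^ 2 from funext fun t => hloss s t]
    refine HasDerivAt.const_mul _ (HasDerivAt.fun_sum fun μ _ => HasDerivAt.fun_sum fun a _ => ?_)
    by_cases ha : a = k
    · simp only [if_pos ha]
      have hψ : HasDerivAt (fun t : ℝ => if l = i then σmid (t * σpre (X μ j)) else 0)
          (if l = i then deriv σmid 0 * σpre (X μ j) else 0) 0 := by
        by_cases hl : l = i
        · simp only [if_pos hl]
          have h1 : HasDerivAt (fun t : ℝ => t * σpre (X μ j)) (σpre (X μ j)) 0 := by
            simpa using (hasDerivAt_id (0:ℝ)).mul_const (σpre (X μ j))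
          have h2 : HasDerivAt σmid (deriv σmid 0) ((0:ℝ) * σpre (X μ j)) := by
            rw [zero_mul]; exact (hmid.differentiable (by simp) 0).hasDerivAt
          simpa [Function.comp_def] using h2.comp 0 h1
        · simp only [if_neg hl]
          exact hasDerivAt_const _ _
      have hψ0 : (if l = i then σmid ((0:ℝ) * σpre (X μ j)) else 0) = 0 := by
        by_cases hl : l = i <;> simp [hl, hmid0]
      have hs := hψ.const_mul s
      have h2 : HasDerivAt σpost (deriv σpost 0)
          (s * (if l = i then σmid ((0:ℝ) * σpre (X μ j)) else 0)) := by
        rw [hψ0, mul_zero]; exact (hpost.differentiable (by simp) 0).hasDerivAt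
      have h3 := h2.comp 0 hs
      have h4 := ((h3.add_const (X μ a)).sub_const (Y μ a)).fun_pow 2
      simpa [Function.comp, hψ0, hpost0, hmid0, mul_zero, ite_self, zero_add] using h4
    · simp only [if_neg ha]
      exact hasDerivAt_const _ _
  have hinner : (fun s : ℝ => deriv (fun t : ℝ => loss σpre σmid σpost 2 R X Y
        (s • coordDir R 2 dx r 1 k l + t • coordDir R 2 dx r 0 i j)) 0)
      = fun s : ℝ => (1 / (2 * (m:ℝ))) * ∑ μ : Fin m, ∑ a,
        (if a = k then 2 * (X μ a - Y μ a) *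
          (deriv σpost 0 * (s * (if l = i then deriv σmid 0 * σpre (X μ j) else 0))) else 0) :=
    funext fun s => (hDt s).deriv
  rw [hinner]
  have hDs : HasDerivAt (fun s : ℝ => (1 / (2 * (m:ℝ))) * ∑ μ : Fin m, ∑ a,
        (if a = k then 2 * (X μ a - Y μ a) *
          (deriv σpost 0 * (s * (if l = i then deriv σmid 0 * σpre (X μ j) else 0))) else 0))
      ((1 / (2 * (m:ℝ))) * ∑ μ : Fin m, ∑ a,
        (if a = k then 2 * (X μ a - Y μ a) *
          (deriv σpost 0 * (if l = i then deriv σmid 0 * σpre (X μ j) else 0)) else 0)) 0 := by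
    refine HasDerivAt.const_mul _ (HasDerivAt.fun_sum fun μ _ => HasDerivAt.fun_sum fun a _ => ?_)
    by_cases ha : a = k
    · simp only [if_pos ha]
      by_cases hl : l = i
      · simp only [if_pos hl]
        have h1 : HasDerivAt (fun s : ℝ => s * (deriv σmid 0 * σpre (X μ j)))
            (deriv σmid 0 * σpre (X μ j)) 0 := by
          simpa using (hasDerivAt_id (0:ℝ)).mul_const (deriv σmid 0 * σpre (X μ j))
        exact (h1.const_mul (deriv σpost 0)).const_mul (2 * (X μ a - Y μ a))
      · simp only [if_neg hl, mul_zero]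
        exact hasDerivAt_const _ _
    · simp only [if_neg ha]
      exact hasDerivAt_const _ _
  rw [hDs.deriv]
  simp only [Finset.sum_ite_eq', Finset.mem_univ, if_true]
  exact d2_final_algebra (deriv σmid 0) (deriv σpost 0) (l = i)
    (fun μ => X μ k - Y μ k) (fun μ => σpre (X μ j))

end D2Off

lemma sum_ite_const {α : Type*} (s : Finset α) (c : Prop) [Decidable c] (f : α → ℝ) :
    (∑ z ∈ s, if c then f z else 0) = if c then ∑ z ∈ s, f z else 0 := by
  split_ifs <;> simp

/-- Theorem 2, part 2: spectrum of the Hessian of a 2-shortcut network at zero.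
With `c = σmid'(0)·σpost'(0) ≠ 0` and `M_{ij} = (1/m)·∑_μ (x^μ_i − y^μ_i)·σpre(x^μ_j)`,
a real `μ` is an eigenvalue of the Hessian of the loss at `w = 0` iff `μ²/c²` is an eigenvalue
of `MᵀM`.  In particular the spectrum (hence the condition number) does not depend on `R`. -/
theorem hessian_eigenvalues_two_shortcut
    {dx m R : ℕ} (hR : 1 ≤ R)
    (σpre σmid σpost : ℝ → ℝ)
    (hpre : ContDiff ℝ (⊤ : ℕ∞) σpre) (hmid : ContDiff ℝ (⊤ : ℕ∞) σmid) (hpost : ContDiff ℝ (⊤ : ℕ∞) σpost)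
    (hmid0 : σmid 0 = 0) (hpost0 : σpost 0 = 0)
    (hc : deriv σmid 0 * deriv σpost 0 ≠ 0)
    (X Y : Fin m → Fin dx → ℝ)
    (M : Matrix (Fin dx) (Fin dx) ℝ)
    (hM : ∀ i j, M i j = (1 / (m : ℝ)) * ∑ μ : Fin m, (X μ i - Y μ i) * σpre (X μ j))
    (H : Matrix (Fin R × Fin 2 × Fin dx × Fin dx) (Fin R × Fin 2 × Fin dx × Fin dx) ℝ)
    (hH : ∀ p q, H p q =
      d2 (loss σpre σmid σpost 2 R X Y)
        (coordDir R 2 dx p.1 p.2.1 p.2.2.1 p.2.2.2)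
        (coordDir R 2 dx q.1 q.2.1 q.2.2.1 q.2.2.2))
    (μ : ℝ) :
    (∃ v, v ≠ 0 ∧ H.mulVec v = μ • v) ↔
      (∃ u, u ≠ 0 ∧
        (M.transpose * M).mulVec u = (μ ^ 2 / (deriv σmid 0 * deriv σpost 0) ^ 2) • u) := by
  classical
  have fin2 : ∀ l : Fin 2, l = 0 ∨ l = 1 := by decide
  have hHval : ∀ (r r' : Fin R) (l₁ l₂ : Fin 2) (a b a' b' : Fin dx),
      H (r, l₁, a, b) (r', l₂, a', b')
        = if r = r' then
            (if l₁ = 0 then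
              (if l₂ = 1 then
                (if b' = a then (deriv σmid 0 * deriv σpost 0) * M a' b else 0) else 0)
            else
              (if l₂ = 0 then
                (if b = a' then (deriv σmid 0 * deriv σpost 0) * M a b' else 0) else 0))
          else 0 := by
    intro r r' l₁ l₂ a b a' b'
    rw [hH]
    dsimp only
    by_cases hr : r = r'
    · subst hr
      rw [if_pos rfl]
      rcases fin2 l₁ with h1 | h1 <;> rcases fin2 l₂ with h2 | h2 <;> subst h1 <;> subst h2
      · rw [d2_loss_zero hpre hmid hpost hmid0 hpost0 X Y r r 0 0 a b a' b'
          (by intro ρ; simp only [Fin.val_zero, Fin.val_one]; omega)]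
        simp
      · rw [d2_loss_offdiag₁ hpre hmid hpost hmid0 hpost0 X Y r a b a' b']
        simp [hM, mul_ite, mul_zero]
      · rw [d2_loss_offdiag₂ hpre hmid hpost hmid0 hpost0 X Y r a' b' a b]
        simp [hM, mul_ite, mul_zero]
      · rw [d2_loss_zero hpre hmid hpost hmid0 hpost0 X Y r r 1 1 a b a' b'
          (by intro ρ; simp only [Fin.val_zero, Fin.val_one]; omega)]
        simp
    · rw [if_neg hr]
      have hv : (r : ℕ) ≠ (r' : ℕ) := fun h => hr (Fin.val_injective h)
      refine d2_loss_zero hpre hmid hpost hmid0 hpost0 X Y r r' l₁ l₂ a b a' b' ?_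
      intro ρ
      have h1 := l₁.isLt
      have h2 := l₂.isLt
      omega
  have h01 : ((0:Fin 2) = 1) = False := by decide
  have h10 : ((1:Fin 2) = 0) = False := by decide
  have hmv1 : ∀ (w : Fin R × Fin 2 × Fin dx × Fin dx → ℝ) (r : Fin R) (i j : Fin dx),
      H.mulVec w (r, 0, i, j)
        = ∑ a', deriv σmid 0 * deriv σpost 0 * M a' j * w (r, 1, a', i) := by
    intro w r i j
    simp only [Matrix.mulVec, dotProduct]
    simp only [Fintype.sum_prod_type, hHval, Fin.sum_univ_two, h01, h10, if_true, if_false,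
      eq_self_iff_true, ite_mul, zero_mul, sum_ite_const, Finset.sum_const_zero,
      add_zero, zero_add, ite_add_ite, Finset.sum_ite_eq, Finset.sum_ite_eq',
      Finset.mem_univ]
  have hmv2 : ∀ (w : Fin R × Fin 2 × Fin dx × Fin dx → ℝ) (r : Fin R) (k l : Fin dx),
      H.mulVec w (r, 1, k, l)
        = ∑ b', deriv σmid 0 * deriv σpost 0 * M k b' * w (r, 0, l, b') := by
    intro w r k l
    simp only [Matrix.mulVec, dotProduct]
    simp only [Fintype.sum_prod_type, hHval, Fin.sum_univ_two, h01, h10, if_true, if_false,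
      eq_self_iff_true, ite_mul, zero_mul, sum_ite_const, Finset.sum_const_zero,
      add_zero, zero_add, ite_add_ite, Finset.sum_ite_eq, Finset.sum_ite_eq',
      Finset.mem_univ]
  have hdiv : ∀ S T : ℝ, (deriv σmid 0 * deriv σpost 0) * S = μ * T →
      S = μ / (deriv σmid 0 * deriv σpost 0) * T := by
    intro S T h
    rw [div_mul_eq_mul_div, eq_div_iff hc]
    linear_combination h
  constructor
  · rintro ⟨v, hv, hmul⟩
    have hE1 : ∀ (r : Fin R) (i j : Fin dx),
        (∑ a', M a' j * v (r, 1, a', i))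
          = μ / (deriv σmid 0 * deriv σpost 0) * v (r, 0, i, j) := by
      intro r i j
      refine hdiv _ _ ?_
      rw [Finset.mul_sum]
      have h := (hmv1 v r i j).symm.trans (congrFun hmul (r, 0, i, j))
      simp only [Pi.smul_apply, smul_eq_mul] at h
      rw [← h]
      exact Finset.sum_congr rfl fun a' _ => by ring
    have hE2 : ∀ (r : Fin R) (k l : Fin dx),
        (∑ b', M k b' * v (r, 0, l, b'))
          = μ / (deriv σmid 0 * deriv σpost 0) * v (r, 1, k, l) := by
      intro r k l
      refine hdiv _ _ ?_
      rw [Finset.mul_sum]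
      have h := (hmv2 v r k l).symm.trans (congrFun hmul (r, 1, k, l))
      simp only [Pi.smul_apply, smul_eq_mul] at h
      rw [← h]
      exact Finset.sum_congr rfl fun b' _ => by ring
    obtain ⟨p₀, hp₀⟩ : ∃ p, v p ≠ 0 := by
      by_contra hcon; push_neg at hcon; exact hv (funext hcon)
    obtain ⟨r, l₀, a₀, b₀⟩ := p₀
    by_cases hlay : ∃ a b, v (r, 0, a, b) ≠ 0
    · obtain ⟨i₀, b₁, hab⟩ := hlay
      refine ⟨fun y => v (r, 0, i₀, y), fun hcon => hab (congrFun hcon b₁), ?_⟩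
      funext y
      rw [← Matrix.mulVec_mulVec]
      have hstep : M.transpose.mulVec (M.mulVec (fun y' => v (r, 0, i₀, y'))) y
          = ∑ k', M k' y * (μ / (deriv σmid 0 * deriv σpost 0) * v (r, 1, k', i₀)) := by
        simp only [Matrix.mulVec, dotProduct, Matrix.transpose_apply]
        exact Finset.sum_congr rfl fun k' _ => by rw [hE2 r k' i₀]
      rw [hstep]
      have hstep2 : (∑ k', M k' y * (μ / (deriv σmid 0 * deriv σpost 0) * v (r, 1, k', i₀)))
          = μ / (deriv σmid 0 * deriv σpost 0) * ∑ k', M k' y * v (r, 1, k', i₀) := by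
        rw [Finset.mul_sum]
        exact Finset.sum_congr rfl fun k' _ => by ring
      rw [hstep2, hE1 r i₀ y]
      have hcc : (deriv σmid 0 * deriv σpost 0) ≠ 0 := hc
      simp only [Pi.smul_apply, smul_eq_mul]
      field_simp
    · push_neg at hlay
      have hl₀ : l₀ = 1 := by
        rcases fin2 l₀ with h | h
        · exact absurd (h ▸ hp₀) (by simp [hlay a₀ b₀])
        · exact h
      rw [hl₀] at hp₀
      have hμ0 : μ = 0 := by
        by_contra hμ
        apply hp₀
        have h2 := hE2 r a₀ b₀
        have hz : (∑ b', M a₀ b' * v (r, 0, b₀, b')) = 0 :=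
          Finset.sum_eq_zero fun b' _ => by rw [hlay b₀ b', mul_zero]
        rw [hz] at h2
        exact ((mul_eq_zero.mp h2.symm).resolve_left (div_ne_zero hμ hc))
      have hwne : (fun a' => v (r, 1, a', b₀)) ≠ 0 :=
        fun hcon => hp₀ (congrFun hcon a₀)
      have hw : M.transpose.mulVec (fun a' => v (r, 1, a', b₀)) = 0 := by
        funext y
        have h1 := hE1 r b₀ y
        rw [hμ0] at h1
        simp only [zero_div, zero_mul] at h1
        simpa [Matrix.mulVec, dotProduct, Matrix.transpose_apply] using h1
      have hdet : M.det = 0 := by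
        have hdet' : M.transpose.det = 0 :=
          Matrix.exists_mulVec_eq_zero_iff.mp ⟨fun a' => v (r, 1, a', b₀), hwne, hw⟩
        simpa [Matrix.det_transpose] using hdet'
      obtain ⟨u, hu, hMu⟩ := Matrix.exists_mulVec_eq_zero_iff.mpr hdet
      refine ⟨u, hu, ?_⟩
      rw [hμ0, ← Matrix.mulVec_mulVec, hMu]
      simp
  · rintro ⟨u, hu, huMM⟩
    obtain ⟨b₀, hb₀⟩ : ∃ b, u b ≠ 0 := by
      by_contra hcon; push_neg at hcon; exact hu (funext hcon)
    have hMtM : ∀ y, (∑ a', M a' y * M.mulVec u a')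
        = μ ^ 2 / (deriv σmid 0 * deriv σpost 0) ^ 2 * u y := by
      intro y
      have h := congrFun huMM y
      rw [← Matrix.mulVec_mulVec] at h
      simpa [Matrix.mulVec, dotProduct, Matrix.transpose_apply] using h
    have hMu0 : μ = 0 → ∀ k', M.mulVec u k' = 0 := by
      intro hμ k'
      have h1 : (∑ y, u y * ∑ a', M a' y * M.mulVec u a')
          = ∑ a', M.mulVec u a' * M.mulVec u a' := by
        calc ∑ y, u y * ∑ a', M a' y * M.mulVec u a'
            = ∑ y, ∑ a', u y * (M a' y * M.mulVec u a') := by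
              exact Finset.sum_congr rfl fun y _ => Finset.mul_sum _ _ _
          _ = ∑ a', ∑ y, u y * (M a' y * M.mulVec u a') := Finset.sum_comm
          _ = ∑ a', (∑ y, M a' y * u y) * M.mulVec u a' := by
              refine Finset.sum_congr rfl fun a' _ => ?_
              rw [Finset.sum_mul]
              exact Finset.sum_congr rfl fun y _ => by ring
          _ = ∑ a', M.mulVec u a' * M.mulVec u a' := by
              refine Finset.sum_congr rfl fun a' _ => ?_
              congr 1
      have hsq : (∑ a', M.mulVec u a' * M.mulVec u a') = 0 := by
        rw [← h1]
        have : ∀ y, u y * (∑ a', M a' y * M.mulVec u a') = 0 := by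
          intro y; rw [hMtM y, hμ]; ring
        exact Finset.sum_eq_zero fun y _ => this y
      have hterm := (Finset.sum_eq_zero_iff_of_nonneg
        (fun a' _ => mul_self_nonneg (M.mulVec u a'))).mp hsq k' (Finset.mem_univ k')
      exact mul_self_eq_zero.mp hterm
    obtain ⟨α, hα, hμα, hkey⟩ : ∃ α : ℝ, α ≠ 0 ∧ μ * α = μ ^ 2 ∧
        ∀ k', (deriv σmid 0 * deriv σpost 0) * (α * M.mulVec u k')
          = μ * ((deriv σmid 0 * deriv σpost 0) * M.mulVec u k') := by
      by_cases hμ : μ = 0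
      · exact ⟨1, one_ne_zero, by rw [hμ]; ring, fun k' => by rw [hμ, hMu0 hμ k']; ring⟩
      · exact ⟨μ, hμ, by ring, fun k' => by ring⟩
    refine ⟨fun q =>
        (if q.1 = (⟨0, hR⟩ : Fin R) ∧ q.2.1 = 0 ∧ q.2.2.1 = b₀ then α * u q.2.2.2 else 0)
        + (if q.1 = (⟨0, hR⟩ : Fin R) ∧ q.2.1 = 1 ∧ q.2.2.2 = b₀ then
            (deriv σmid 0 * deriv σpost 0) * M.mulVec u q.2.2.1 else 0), ?_, ?_⟩
    · intro hcon
      have hz := congrFun hcon ((⟨0, hR⟩ : Fin R), 0, b₀, b₀)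
      simp only [h01, Pi.zero_apply, if_true, if_false, and_true, true_and, and_false,
        false_and, eq_self_iff_true, add_zero] at hz
      exact hb₀ ((mul_eq_zero.mp hz).resolve_left hα)
    · funext p
      obtain ⟨ρ, l', x, y⟩ := p
      have hps : (μ • (fun q : Fin R × Fin 2 × Fin dx × Fin dx =>
          (if q.1 = (⟨0, hR⟩ : Fin R) ∧ q.2.1 = 0 ∧ q.2.2.1 = b₀ then α * u q.2.2.2 else 0)
          + (if q.1 = (⟨0, hR⟩ : Fin R) ∧ q.2.1 = 1 ∧ q.2.2.2 = b₀ then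
              (deriv σmid 0 * deriv σpost 0) * M.mulVec u q.2.2.1 else 0))) (ρ, l', x, y)
          = μ * ((if ρ = (⟨0, hR⟩ : Fin R) ∧ l' = 0 ∧ x = b₀ then α * u y else 0)
          + (if ρ = (⟨0, hR⟩ : Fin R) ∧ l' = 1 ∧ y = b₀ then
              (deriv σmid 0 * deriv σpost 0) * M.mulVec u x else 0)) := rfl
      rcases fin2 l' with hl' | hl' <;> subst hl'
      · rw [hmv1, hps]
        simp only [h01, h10, if_true, if_false, and_true, true_and, and_false, false_and,
          eq_self_iff_true, add_zero, zero_add, mul_ite, mul_zero, sum_ite_const]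
        by_cases hcnd : ρ = (⟨0, hR⟩ : Fin R) ∧ x = b₀
        · rw [if_pos hcnd, if_pos hcnd]
          have hpull : (∑ a', deriv σmid 0 * deriv σpost 0 * M a' y *
                ((deriv σmid 0 * deriv σpost 0) * M.mulVec u a'))
              = (deriv σmid 0 * deriv σpost 0) ^ 2 * ∑ a', M a' y * M.mulVec u a' := by
            rw [Finset.mul_sum]
            exact Finset.sum_congr rfl fun a' _ => by ring
          rw [hpull, hMtM y]
          have hcc : (deriv σmid 0 * deriv σpost 0) ^ 2 ≠ 0 := pow_ne_zero 2 hc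
          have : (deriv σmid 0 * deriv σpost 0) ^ 2 *
              (μ ^ 2 / (deriv σmid 0 * deriv σpost 0) ^ 2 * u y) = μ ^ 2 * u y := by
            rw [div_mul_eq_mul_div, mul_div_assoc', mul_div_cancel_left₀ _ hcc]
          rw [this, ← hμα]
          ring
        · rw [if_neg hcnd, if_neg hcnd]
      · rw [hmv2, hps]
        simp only [h01, h10, if_true, if_false, and_true, true_and, and_false, false_and,
          eq_self_iff_true, add_zero, zero_add, mul_ite, mul_zero, sum_ite_const]
        by_cases hcnd : ρ = (⟨0, hR⟩ : Fin R) ∧ y = b₀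
        · rw [if_pos hcnd, if_pos hcnd]
          have hpull : (∑ b', deriv σmid 0 * deriv σpost 0 * M x b' * (α * u b'))
              = (deriv σmid 0 * deriv σpost 0) * (α * ∑ b', M x b' * u b') := by
            rw [Finset.mul_sum, Finset.mul_sum]
            exact Finset.sum_congr rfl fun b' _ => by ring
          rw [hpull]
          have hMux : (∑ b', M x b' * u b') = M.mulVec u x := rfl
          rw [hMux]
          exact hkey x
        · rw [if_neg hcnd, if_neg hcnd]

end
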